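/- arXiv:1603.03516 — 2 statements merged into one kernel-verified Lean document; each statement's English description precedes it below -/
import Mathlib

section
/- Let Σ = BBᵀ + Σ_u where B ∈ ℝ^{d×r} and Σ_u ∈ ℝ^{d×d} is symmetric positive semidefinite with ‖Σ_u‖_2 ≤ C₀. Let λ_1 ≥ … ≥ λ_d be the eigenvalues of Σ with orthonormal eigenvectors v_1,…,v_d, V = [v_1,…,v_r], and let λ̄_1 ≥ … ≥ λ̄_r be the nonzero eigenvalues of BBᵀ. Then: (i) for every C₁ > 0 there exists C₂ > 0 depending only on C₀, C₁, r such that if ‖B‖_max ≤ C₁, λ̄_r ≥ d/C₁, min_{1≤i≤r}(λ̄_i − λ̄_{i+1}) ≥ d/C₁ (with λ̄_{r+1} := 0), and d ≥ C₂, then max_{i≤r} ‖v_i‖_∞ ≤ C₂/√d (hence μ(V) ≤ r·C₂²), and moreover |λ_i − λ̄_i| ≤ C₀ for all i ≤ r; (ii) conversely, for every C₁ > 0 there exists C₂ > 0 depending only on C₀, C₁, r such that if μ(V) ≤ C₁, λ_r ≥ d/C₁ and λ_1 ≤ C₁·d, then ‖B‖_max ≤ C₂. -/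
open Matrix BigOperators

/-- Entrywise max norm: largest absolute value of an entry. -/
noncomputable def matMaxNorm {m n : Type*} [Fintype m] [Fintype n] (M : Matrix m n ℝ) : ℝ :=
  ⨆ i, ⨆ j, |M i j|

/-- Matrix ∞-norm: maximum absolute row sum. -/
noncomputable def matInfNorm {m n : Type*} [Fintype m] [Fintype n] (M : Matrix m n ℝ) : ℝ :=
  ⨆ i, ∑ j, |M i j|

/-- Matrix 1-norm: maximum absolute column sum. -/
noncomputable def matOneNorm {m n : Type*} [Fintype m] [Fintype n] (M : Matrix m n ℝ) : ℝ :=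
  ⨆ j, ∑ i, |M i j|

/-- Euclidean norm of a vector. -/
noncomputable def vec2Norm {n : Type*} [Fintype n] (x : n → ℝ) : ℝ :=
  Real.sqrt (∑ i, (x i) ^ 2)

/-- ℓ∞ norm of a vector. -/
noncomputable def vecSupNorm {n : Type*} [Fintype n] (x : n → ℝ) : ℝ :=
  ⨆ i, |x i|

/-- Spectral norm (operator 2-norm) of a matrix. -/
noncomputable def matSpecNorm {m n : Type*} [Fintype m] [Fintype n] (M : Matrix m n ℝ) : ℝ :=
  sSup {c : ℝ | ∃ x : n → ℝ, vec2Norm x ≤ 1 ∧ c = vec2Norm (M.mulVec x)}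

/-- Coherence of a d × r matrix with orthonormal columns. -/
noncomputable def matCoherence {d r : ℕ} (V : Matrix (Fin d) (Fin r) ℝ) : ℝ :=
  ((d : ℝ) / (r : ℝ)) * ⨆ i, ∑ j, (V i j) ^ 2

/-- Inverse of the positive semidefinite square root of a matrix (junk value otherwise). -/
noncomputable def matInvSqrt {n : Type*} [Fintype n] [DecidableEq n] (S : Matrix n n ℝ) :
    Matrix n n ℝ :=
  letI := Classical.propDecidable
  if h : S.PosSemidef then
    (h.1.eigenvectorUnitary.1 * diagonal ((↑) ∘ (√·) ∘ h.1.eigenvalues) *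
      (star h.1.eigenvectorUnitary : Matrix n n ℝ))⁻¹ else 0

/-- Weighted max-norm for matrices with d₁ + d₂ rows. -/
noncomputable def wMaxNorm {d₁ d₂ : ℕ} {n : Type*} [Fintype n]
    (M : Matrix (Fin d₁ ⊕ Fin d₂) n ℝ) : ℝ :=
  matMaxNorm (Matrix.of fun i j =>
    (Sum.elim (fun _ : Fin d₁ => Real.sqrt d₁) (fun _ : Fin d₂ => Real.sqrt d₂) i) * M i j)

/-- Huber loss with parameter α. -/
noncomputable def huberLoss (α x : ℝ) : ℝ := if |x| ≤ α then x ^ 2 else 2 * α * |x| - α ^ 2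

/-!
Everything is read off Rayleigh quotients in the orthonormal eigenbases. A dimension count (a
nonzero vector in an `(i+1)`-dimensional span orthogonal to `i` given vectors) gives the
Courant–Fischer comparisons `λ̄ᵢ ≤ λᵢ ≤ λ̄ᵢ + ‖Σᵤ‖₂`, and `λ_{r+1} ≤ ‖Σᵤ‖₂` because `BBᵀ` has rank
at most `r`. For (i), the eigen-equation `λᵢ vᵢ = BBᵀvᵢ + Σᵤvᵢ` bounds every entry of `λᵢ vᵢ` by
`r √d ‖B‖²_max + ‖Σᵤ‖₂`, and `λᵢ ≥ d / C₁` turns this into `‖vᵢ‖_∞ ≲ 1 / √d`. For (ii),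
`B_{ak}² ≤ Σ_{aa} = ∑ᵢ λᵢ vᵢ(a)²`: the first `r` terms are at most `λ₁ · μ(V) r / d ≤ C₁² r`, the
remaining ones sum to at most `‖Σᵤ‖₂`.
-/

open scoped Matrix.Norms.L2Operator

section Norms
variable {m n : Type*} [Fintype m] [Fintype n]

theorem vec2Norm_eq_norm (x : n → ℝ) : vec2Norm x = ‖WithLp.toLp 2 x‖ := by
  simp [vec2Norm, EuclideanSpace.norm_eq]

theorem vec2Norm_sq (x : n → ℝ) : vec2Norm x ^ 2 = x ⬝ᵥ x := by
  rw [vec2Norm, Real.sq_sqrt (by positivity)]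
  simp [dotProduct, sq]

theorem abs_apply_le_vec2Norm (x : n → ℝ) (a : n) : |x a| ≤ vec2Norm x := by
  simpa [vec2Norm_eq_norm] using PiLp.norm_apply_le (WithLp.toLp 2 x) a

theorem abs_dotProduct_le (x y : n → ℝ) : |x ⬝ᵥ y| ≤ vec2Norm x * vec2Norm y := by
  classical
  simpa [vec2Norm_eq_norm, EuclideanSpace.inner_eq_star_dotProduct, dotProduct_comm] using
    abs_real_inner_le_norm (WithLp.toLp 2 x) (WithLp.toLp 2 y)

theorem matSpecNorm_eq_l2_opNorm [DecidableEq n] (M : Matrix m n ℝ) : matSpecNorm M = ‖M‖ := by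
  rw [Matrix.l2_opNorm_def, ← ContinuousLinearMap.sSup_unitClosedBall_eq_norm, matSpecNorm]
  congr 1
  ext c
  simp only [Set.mem_ofPred_eq, Set.mem_image, Metric.mem_closedBall, dist_zero_right]
  constructor
  · rintro ⟨x, hx, rfl⟩
    refine ⟨WithLp.toLp 2 x, by rwa [← vec2Norm_eq_norm], ?_⟩
    simp [vec2Norm_eq_norm]
  · rintro ⟨x, hx, rfl⟩
    refine ⟨x.ofLp, by rwa [vec2Norm_eq_norm], ?_⟩
    simp [vec2Norm_eq_norm, Matrix.toLpLin_apply]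

theorem matSpecNorm_nonneg (M : Matrix m n ℝ) : 0 ≤ matSpecNorm M := by
  classical
  exact matSpecNorm_eq_l2_opNorm M ▸ norm_nonneg M

theorem vec2Norm_mulVec_le (M : Matrix m n ℝ) (x : n → ℝ) :
    vec2Norm (M *ᵥ x) ≤ matSpecNorm M * vec2Norm x := by
  classical
  simpa [matSpecNorm_eq_l2_opNorm, vec2Norm_eq_norm] using M.l2_opNorm_mulVec (WithLp.toLp 2 x)

theorem dotProduct_mulVec_le_matSpecNorm (M : Matrix n n ℝ) (x : n → ℝ) :
    x ⬝ᵥ M *ᵥ x ≤ matSpecNorm M * (x ⬝ᵥ x) := by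
  calc x ⬝ᵥ M *ᵥ x ≤ vec2Norm x * vec2Norm (M *ᵥ x) := (le_abs_self _).trans (abs_dotProduct_le _ _)
    _ ≤ vec2Norm x * (matSpecNorm M * vec2Norm x) :=
        mul_le_mul_of_nonneg_left (vec2Norm_mulVec_le M x) (Real.sqrt_nonneg _)
    _ = matSpecNorm M * (x ⬝ᵥ x) := by rw [← vec2Norm_sq]; ring

theorem abs_le_matMaxNorm (M : Matrix m n ℝ) (i : m) (j : n) : |M i j| ≤ matMaxNorm M :=
  le_ciSup_of_le (Set.finite_range _).bddAbove i
    (le_ciSup (f := fun j => |M i j|) (Set.finite_range _).bddAbove j)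

theorem matMaxNorm_nonneg (M : Matrix m n ℝ) : 0 ≤ matMaxNorm M :=
  Real.iSup_nonneg fun _ => Real.iSup_nonneg fun _ => abs_nonneg _

theorem matMaxNorm_le {M : Matrix m n ℝ} {c : ℝ} (h : ∀ i j, |M i j| ≤ c) (hc : 0 ≤ c) :
    matMaxNorm M ≤ c :=
  Real.iSup_le (fun i => Real.iSup_le (h i) hc) hc

theorem matMaxNorm_transpose (M : Matrix m n ℝ) : matMaxNorm Mᵀ = matMaxNorm M :=
  le_antisymm (matMaxNorm_le (fun i j => abs_le_matMaxNorm M j i) (matMaxNorm_nonneg M))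
    (matMaxNorm_le (fun i j => abs_le_matMaxNorm Mᵀ j i) (matMaxNorm_nonneg _))

theorem abs_mulVec_apply_le_of_abs_le (M : Matrix m n ℝ) {y : n → ℝ} {K : ℝ}
    (hy : ∀ j, |y j| ≤ K) (a : m) : |(M *ᵥ y) a| ≤ Fintype.card n * matMaxNorm M * K := by
  calc |(M *ᵥ y) a| ≤ ∑ j, |M a j| * |y j| := by
        simpa only [mulVec, dotProduct, abs_mul] using
          Finset.abs_sum_le_sum_abs (fun j => M a j * y j) Finset.univ
    _ ≤ ∑ _j : n, matMaxNorm M * K := Finset.sum_le_sum fun j _ =>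
        mul_le_mul (abs_le_matMaxNorm M a j) (hy j) (abs_nonneg _) (matMaxNorm_nonneg M)
    _ = Fintype.card n * matMaxNorm M * K := by simp [mul_assoc]

theorem abs_mulVec_apply_le (M : Matrix m n ℝ) (x : n → ℝ) (a : m) :
    |(M *ᵥ x) a| ≤ √(Fintype.card n) * matMaxNorm M * vec2Norm x := by
  have hrow : vec2Norm (M a) ≤ √(Fintype.card n) * matMaxNorm M := by
    rw [vec2Norm, ← Real.sqrt_sq (matMaxNorm_nonneg M), ← Real.sqrt_mul (by positivity)]
    refine Real.sqrt_le_sqrt ?_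
    calc ∑ j, M a j ^ 2 ≤ ∑ _j : n, matMaxNorm M ^ 2 := Finset.sum_le_sum fun j _ =>
          sq_le_sq' (neg_le_of_abs_le (abs_le_matMaxNorm M a j))
            (le_of_abs_le (abs_le_matMaxNorm M a j))
      _ = _ := by simp
  exact (abs_dotProduct_le _ _).trans (mul_le_mul_of_nonneg_right hrow (Real.sqrt_nonneg _))

end Norms

theorem abs_mul_transpose_add_mulVec_apply_le {m k : Type*} [Fintype m] [Fintype k]
    (B : Matrix m k ℝ) (S : Matrix m m ℝ) (x : m → ℝ) (a : m) :
    |((B * Bᵀ + S) *ᵥ x) a| ≤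
      (Fintype.card k * √(Fintype.card m) * matMaxNorm B ^ 2 + matSpecNorm S) * vec2Norm x := by
  have hBx : ∀ j, |(Bᵀ *ᵥ x) j| ≤ √(Fintype.card m) * matMaxNorm B * vec2Norm x := by
    simpa only [matMaxNorm_transpose] using abs_mulVec_apply_le Bᵀ x
  have hBBx := abs_mulVec_apply_le_of_abs_le B hBx a
  have hSx := (abs_apply_le_vec2Norm (S *ᵥ x) a).trans (vec2Norm_mulVec_le S x)
  rw [add_mulVec, ← mulVec_mulVec, Pi.add_apply]
  refine (abs_add_le _ _).trans ?_
  nlinarith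

theorem matCoherence_nonneg {d r : ℕ} (V : Matrix (Fin d) (Fin r) ℝ) : 0 ≤ matCoherence V :=
  mul_nonneg (by positivity) (Real.iSup_nonneg fun _ => by positivity)

theorem matCoherence_le_of_abs_le {d r : ℕ} {V : Matrix (Fin d) (Fin r) ℝ} {K : ℝ}
    (h : ∀ a j, |V a j| ≤ K / √d) : matCoherence V ≤ K ^ 2 := by
  have hrow : ∀ a, ∑ j, V a j ^ 2 ≤ r * (K ^ 2 / d) := fun a => by
    calc ∑ j, V a j ^ 2 ≤ ∑ _j : Fin r, K ^ 2 / d := Finset.sum_le_sum fun j _ => by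
          rw [← sq_abs, ← Real.sq_sqrt (Nat.cast_nonneg d), ← div_pow]
          exact pow_le_pow_left₀ (abs_nonneg _) (h a j) 2
      _ = r * (K ^ 2 / d) := by simp
  calc matCoherence V ≤ d / r * (r * (K ^ 2 / d)) :=
        mul_le_mul_of_nonneg_left (Real.iSup_le hrow (by positivity)) (by positivity)
    _ ≤ K ^ 2 := by
        rcases eq_or_ne (r : ℝ) 0 with hr | hr
        · simp [hr]; positivity
        rcases eq_or_ne (d : ℝ) 0 with hd | hd
        · simp [hd]; positivity
        · exact le_of_eq (by field_simp)

theorem sum_sq_le_of_matCoherence_le {d r : ℕ} {V : Matrix (Fin d) (Fin r) ℝ} {C : ℝ}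
    (h : matCoherence V ≤ C) (a : Fin d) : ∑ j, V a j ^ 2 ≤ C * r / d := by
  rcases Nat.eq_zero_or_pos r with rfl | hr
  · simp
  have hd : (0 : ℝ) < d := by exact_mod_cast a.pos
  have hsup : ∑ j, V a j ^ 2 ≤ ⨆ i, ∑ j, V i j ^ 2 :=
    le_ciSup (f := fun i => ∑ j, V i j ^ 2) (Set.finite_range _).bddAbove a
  rw [le_div_iff₀ hd]
  calc (∑ j, V a j ^ 2) * d = d / r * (∑ j, V a j ^ 2) * r := by field_simp
    _ ≤ C * r := by
        gcongr
        exact (mul_le_mul_of_nonneg_left hsup (by positivity)).trans h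

theorem of_mul_transpose_eq_one {ι n : Type*} [Fintype n] [DecidableEq ι] {u : ι → n → ℝ}
    (h : ∀ i j, ∑ k, u i k * u j k = if i = j then (1 : ℝ) else 0) :
    of u * (of u)ᵀ = 1 := by
  ext i j
  simp [mul_apply, one_apply, h]

theorem mul_transpose_eq_spectral {m n ι : Type*} [Fintype n] [Fintype ι] [DecidableEq ι]
    {B : Matrix m n ℝ} {μ : ι → ℝ} {w : ι → m → ℝ}
    (h : ∀ a b, (B * Bᵀ) a b = ∑ i, μ i * w i a * w i b) :
    B * Bᵀ = (of w)ᵀ * diagonal μ * of w := by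
  ext a b
  rw [h, mul_apply]
  exact Finset.sum_congr rfl fun i _ => by
    rw [mul_diagonal, transpose_apply, of_apply, of_apply]; ring

theorem vec2Norm_row_eq_one {ι n : Type*} [Fintype n] [DecidableEq ι] {U : Matrix ι n ℝ}
    (hU : U * Uᵀ = 1) (i : ι) : vec2Norm (U i) = 1 := by
  have h : U i ⬝ᵥ U i = 1 := by simpa [mul_apply, dotProduct] using congrFun (congrFun hU i) i
  exact (pow_eq_one_iff_of_nonneg (Real.sqrt_nonneg _) two_ne_zero).mp ((vec2Norm_sq _).trans h)

section Spectral
variable {ι n : Type*} [Fintype ι] [Fintype n]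

theorem mulVec_transpose_mulVec [DecidableEq ι] {U : Matrix ι n ℝ} (hU : U * Uᵀ = 1)
    (c : ι → ℝ) : U *ᵥ (Uᵀ *ᵥ c) = c := by
  rw [mulVec_mulVec, hU, one_mulVec]

theorem dotProduct_self_transpose_mulVec [DecidableEq ι] {U : Matrix ι n ℝ} (hU : U * Uᵀ = 1)
    (c : ι → ℝ) : (Uᵀ *ᵥ c) ⬝ᵥ (Uᵀ *ᵥ c) = c ⬝ᵥ c := by
  rw [dotProduct_mulVec, vecMul_transpose, mulVec_transpose_mulVec hU]

theorem dotProduct_self_mulVec_le [DecidableEq ι] {U : Matrix ι n ℝ} (hU : U * Uᵀ = 1)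
    (x : n → ℝ) : (U *ᵥ x) ⬝ᵥ (U *ᵥ x) ≤ x ⬝ᵥ x := by
  set p := Uᵀ *ᵥ (U *ᵥ x)
  have hxp : x ⬝ᵥ p = (U *ᵥ x) ⬝ᵥ (U *ᵥ x) := by
    rw [dotProduct_mulVec, vecMul_transpose]
  have hpp : p ⬝ᵥ p = (U *ᵥ x) ⬝ᵥ (U *ᵥ x) := dotProduct_self_transpose_mulVec hU _
  have h := dotProduct_self_star_nonneg (x - p)
  simp only [star_trivial, sub_dotProduct, dotProduct_sub, dotProduct_comm p x, hxp, hpp] at h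
  linarith

theorem dotProduct_self_mulVec_of_square [DecidableEq n] {V : Matrix n n ℝ} (hV : V * Vᵀ = 1)
    (x : n → ℝ) : (V *ᵥ x) ⬝ᵥ (V *ᵥ x) = x ⬝ᵥ x := by
  simpa using dotProduct_self_transpose_mulVec (mul_eq_one_comm.mp hV) x

theorem eq_spectral_of_mulVec_eq_smul [DecidableEq n] {M V : Matrix n n ℝ} {lam : n → ℝ}
    (hV : V * Vᵀ = 1) (heig : ∀ i, M *ᵥ V i = lam i • V i) :
    M = Vᵀ * diagonal lam * V := by
  have hMV : M * Vᵀ = Vᵀ * diagonal lam := by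
    ext a i
    rw [mul_diagonal, transpose_apply, mul_comm]
    simpa [mulVec, dotProduct, mul_apply] using congrFun (heig i) a
  rw [← hMV, Matrix.mul_assoc, mul_eq_one_comm.mp hV, Matrix.mul_one]

theorem dotProduct_mulVec_spectral (U : Matrix ι n ℝ) (μ : ι → ℝ) (x : n → ℝ) [DecidableEq ι] :
    x ⬝ᵥ (Uᵀ * diagonal μ * U) *ᵥ x = ∑ k, μ k * (U *ᵥ x) k ^ 2 := by
  rw [← mulVec_mulVec, ← mulVec_mulVec, dotProduct_mulVec, vecMul_transpose]
  simp [dotProduct, mulVec_diagonal, sq, mul_left_comm]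

theorem diag_spectral_le [DecidableEq n] {V : Matrix n n ℝ}
    (hV : V * Vᵀ = 1) {lam : n → ℝ} (s : Finset n) {α β : ℝ} (hα : ∀ i ∈ s, lam i ≤ α)
    (hβ : ∀ i ∉ s, lam i ≤ β) (hβ0 : 0 ≤ β) (a : n) :
    (Vᵀ * diagonal lam * V) a a ≤ α * ∑ i ∈ s, V i a ^ 2 + β := by
  have hVV : Vᵀ * V = 1 := mul_eq_one_comm.mp hV
  have hcol : ∑ i, V i a ^ 2 = 1 := by simpa [mul_apply, sq] using congrFun (congrFun hVV a) a
  have hdiag : (Vᵀ * diagonal lam * V) a a = ∑ i, lam i * V i a ^ 2 := by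
    rw [mul_apply]
    exact Finset.sum_congr rfl fun i _ => by rw [mul_diagonal, transpose_apply]; ring
  rw [hdiag, ← Finset.sum_add_sum_compl s]
  calc ∑ i ∈ s, lam i * V i a ^ 2 + ∑ i ∈ sᶜ, lam i * V i a ^ 2
      ≤ ∑ i ∈ s, α * V i a ^ 2 + ∑ i ∈ sᶜ, β * V i a ^ 2 := by
        gcongr with i hi i hi
        · exact hα i hi
        · exact hβ i (Finset.mem_compl.mp hi)
    _ ≤ α * ∑ i ∈ s, V i a ^ 2 + β * ∑ i, V i a ^ 2 := by
        rw [← Finset.mul_sum, ← Finset.mul_sum]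
        gcongr
        exact Finset.subset_univ _
    _ = α * ∑ i ∈ s, V i a ^ 2 + β := by rw [hcol, mul_one]

variable [LinearOrder ι] [DecidableEq ι] {U : Matrix ι n ℝ} {μ : ι → ℝ}

theorem dotProduct_mulVec_spectral_le (hμ : Antitone μ) {i : ι} {x : n → ℝ}
    (hx : ∀ k < i, (U *ᵥ x) k = 0) :
    x ⬝ᵥ (Uᵀ * diagonal μ * U) *ᵥ x ≤ μ i * ((U *ᵥ x) ⬝ᵥ (U *ᵥ x)) := by
  rw [dotProduct_mulVec_spectral, dotProduct, Finset.mul_sum]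
  refine Finset.sum_le_sum fun k _ => ?_
  rcases lt_or_ge k i with hk | hk
  · simp [hx k hk]
  · rw [← sq]; exact mul_le_mul_of_nonneg_right (hμ hk) (sq_nonneg _)

theorem le_dotProduct_mulVec_spectral (hμ : Antitone μ) {i : ι} {x : n → ℝ}
    (hx : ∀ k, i < k → (U *ᵥ x) k = 0) :
    μ i * ((U *ᵥ x) ⬝ᵥ (U *ᵥ x)) ≤ x ⬝ᵥ (Uᵀ * diagonal μ * U) *ᵥ x := by
  rw [dotProduct_mulVec_spectral, dotProduct, Finset.mul_sum]
  refine Finset.sum_le_sum fun k _ => ?_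
  rcases le_or_gt k i with hk | hk
  · rw [← sq]; exact mul_le_mul_of_nonneg_right (hμ hk) (sq_nonneg _)
  · simp [hx k hk]

theorem le_dotProduct_mulVec_spectral_transpose (hU : U * Uᵀ = 1) (hμ : Antitone μ) {i : ι}
    {c : ι → ℝ} (hc : ∀ k, i < k → c k = 0) :
    μ i * (c ⬝ᵥ c) ≤ (Uᵀ *ᵥ c) ⬝ᵥ (Uᵀ * diagonal μ * U) *ᵥ (Uᵀ *ᵥ c) := by
  have h := le_dotProduct_mulVec_spectral hμ (x := Uᵀ *ᵥ c) (by rwa [mulVec_transpose_mulVec hU])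
  rwa [mulVec_transpose_mulVec hU] at h

end Spectral

theorem exists_ne_zero_mulVec_eq_zero_of_card_lt {κ ι : Type*} [Fintype κ] [Fintype ι]
    (A : Matrix κ ι ℝ) (h : Fintype.card κ < Fintype.card ι) : ∃ c ≠ 0, A *ᵥ c = 0 := by
  obtain ⟨c, hc, hc0⟩ := Submodule.exists_mem_ne_zero_of_ne_bot
    (LinearMap.ker_ne_bot_of_finrank_lt (f := A.mulVecLin) (by simpa using h))
  exact ⟨c, hc0, hc⟩

theorem exists_ne_zero_mulVec_eq_zero_vanishing_above {κ : Type*} [Fintype κ] {m : ℕ}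
    (A : Matrix κ (Fin m) ℝ) (i : Fin m) (h : Fintype.card κ ≤ i) :
    ∃ c ≠ 0, (∀ j, i < j → c j = 0) ∧ A *ᵥ c = 0 := by
  -- the vanishing coordinates are `m - 1 - i` further linear constraints
  let E : Matrix {j // i < j} (Fin m) ℝ := of fun j => Pi.single j.1 1
  have hcard : Fintype.card (κ ⊕ {j // i < j}) < m := by
    rw [Fintype.card_sum, Fintype.card_subtype, Finset.filter_lt_eq_Ioi, Fin.card_Ioi]
    omega
  obtain ⟨c, hc, hAc⟩ :=
    exists_ne_zero_mulVec_eq_zero_of_card_lt (fromRows A E) (by simpa using hcard)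
  rw [fromRows_mulVec, ← Sum.elim_zero_zero, Sum.elim_eq_iff] at hAc
  refine ⟨c, hc, fun j hj => ?_, hAc.1⟩
  simpa [E, mulVec, single_dotProduct] using congrFun hAc.2 ⟨j, hj⟩

theorem card_subtype_val_lt_le (n i : ℕ) : Fintype.card {k : Fin n // (k : ℕ) < i} ≤ i := by
  simpa using Fintype.card_le_of_injective (fun k => (⟨k.1, k.2⟩ : Fin i))
    fun k l h => by ext; simpa using congrArg Fin.val h

section Weyl
variable {d r : ℕ} {S V : Matrix (Fin d) (Fin d) ℝ} {lam : Fin d → ℝ}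
  {W : Matrix (Fin r) (Fin d) ℝ} {μ : Fin r → ℝ}

theorem le_eigenvalue_add_posSemidef (hW : W * Wᵀ = 1) (hμ : Antitone μ) (hV : V * Vᵀ = 1)
    (hlam : Antitone lam) (hS : S.PosSemidef)
    (hN : Wᵀ * diagonal μ * W + S = Vᵀ * diagonal lam * V) (hrd : r ≤ d) (i : Fin r) :
    μ i ≤ lam (Fin.castLE hrd i) := by
  obtain ⟨c, hc, hci, hVc⟩ := exists_ne_zero_mulVec_eq_zero_vanishing_above
    (V.submatrix (fun k : {k : Fin d // (k : ℕ) < i} => k.1) id * Wᵀ) i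
    (card_subtype_val_lt_le d i)
  -- test vector: `x = Wᵀ c ∈ span {w₀, …, wᵢ}` with `x ⊥ v₀, …, v_{i-1}`
  rw [← mulVec_mulVec] at hVc
  have hlow := le_dotProduct_mulVec_spectral_transpose hW hμ hci
  set x := Wᵀ *ᵥ c
  have hup : x ⬝ᵥ (Vᵀ * diagonal lam * V) *ᵥ x ≤ lam (Fin.castLE hrd i) * (c ⬝ᵥ c) := by
    rw [← dotProduct_self_transpose_mulVec hW, ← dotProduct_self_mulVec_of_square hV]
    exact dotProduct_mulVec_spectral_le hlam fun k hk => congrFun hVc ⟨k, hk⟩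
  have hSx : 0 ≤ x ⬝ᵥ S *ᵥ x := by simpa using hS.dotProduct_mulVec_nonneg x
  have hcc : 0 < c ⬝ᵥ c := by simpa using dotProduct_self_star_pos_iff.mpr hc
  rw [← hN, add_mulVec, dotProduct_add] at hup
  nlinarith

theorem eigenvalue_le_add_matSpecNorm (hW : W * Wᵀ = 1) (hμ : Antitone μ) (hV : V * Vᵀ = 1)
    (hlam : Antitone lam) (hN : Wᵀ * diagonal μ * W + S = Vᵀ * diagonal lam * V)
    (hrd : r ≤ d) {i : Fin r} (hμi : 0 ≤ μ i) :
    lam (Fin.castLE hrd i) ≤ μ i + matSpecNorm S := by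
  obtain ⟨c, hc, hci, hWc⟩ := exists_ne_zero_mulVec_eq_zero_vanishing_above
    (W.submatrix (fun k : {k : Fin r // (k : ℕ) < i} => k.1) id * Vᵀ) (Fin.castLE hrd i)
    (card_subtype_val_lt_le r i)
  -- test vector: `x = Vᵀ c ∈ span {v₀, …, vᵢ}` with `x ⊥ w₀, …, w_{i-1}`
  rw [← mulVec_mulVec] at hWc
  have hlow := le_dotProduct_mulVec_spectral_transpose hV hlam hci
  set x := Vᵀ *ᵥ c
  have hxx : x ⬝ᵥ x = c ⬝ᵥ c := dotProduct_self_transpose_mulVec hV c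
  have hWx : x ⬝ᵥ (Wᵀ * diagonal μ * W) *ᵥ x ≤ μ i * (c ⬝ᵥ c) :=
    (dotProduct_mulVec_spectral_le hμ fun k hk => congrFun hWc ⟨k, hk⟩).trans
      (hxx ▸ mul_le_mul_of_nonneg_left (dotProduct_self_mulVec_le hW x) hμi)
  have hSx := dotProduct_mulVec_le_matSpecNorm S x
  have hcc : 0 < c ⬝ᵥ c := by simpa using dotProduct_self_star_pos_iff.mpr hc
  rw [← hN, add_mulVec, dotProduct_add] at hlow
  rw [hxx] at hSx
  nlinarith

theorem eigenvalue_le_matSpecNorm_of_lowRank (B : Matrix (Fin d) (Fin r) ℝ) (hV : V * Vᵀ = 1)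
    (hlam : Antitone lam) (hN : B * Bᵀ + S = Vᵀ * diagonal lam * V) (hrd : r < d) :
    lam ⟨r, hrd⟩ ≤ matSpecNorm S := by
  obtain ⟨c, hc, hci, hBc⟩ := exists_ne_zero_mulVec_eq_zero_vanishing_above (Bᵀ * Vᵀ) ⟨r, hrd⟩
    (by simp)
  -- test vector: `x = Vᵀ c ∈ span {v₀, …, v_r}` orthogonal to the `r` columns of `B`
  rw [← mulVec_mulVec] at hBc
  have hlow := le_dotProduct_mulVec_spectral_transpose hV hlam hci
  set x := Vᵀ *ᵥ c
  have hxx : x ⬝ᵥ x = c ⬝ᵥ c := dotProduct_self_transpose_mulVec hV c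
  have hBx : x ⬝ᵥ (B * Bᵀ) *ᵥ x = 0 := by
    rw [← mulVec_mulVec, dotProduct_mulVec, ← mulVec_transpose, hBc, zero_dotProduct]
  have hSx := dotProduct_mulVec_le_matSpecNorm S x
  have hcc : 0 < c ⬝ᵥ c := by simpa using dotProduct_self_star_pos_iff.mpr hc
  rw [← hN, add_mulVec, dotProduct_add, hBx] at hlow
  rw [hxx] at hSx
  nlinarith

end Weyl

theorem abs_apply_le_of_spiked_eigenvector {d r : ℕ} (hd : 0 < d) {C₀ C₁ lam : ℝ} (hC₁ : 0 < C₁)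
    {B : Matrix (Fin d) (Fin r) ℝ} {S : Matrix (Fin d) (Fin d) ℝ} {x : Fin d → ℝ}
    (hB : matMaxNorm B ≤ C₁) (hS : matSpecNorm S ≤ C₀) (hx : (B * Bᵀ + S) *ᵥ x = lam • x)
    (hx1 : vec2Norm x = 1) (hlam : d / C₁ ≤ lam) (a : Fin d) :
    |x a| ≤ (r * C₁ ^ 3 + C₀ * C₁) / √d := by
  have hsd : 1 ≤ √(d : ℝ) := Real.one_le_sqrt.mpr (by exact_mod_cast hd)
  have hdd : √(d : ℝ) * √d = d := Real.mul_self_sqrt (Nat.cast_nonneg d)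
  have hC₀ : 0 ≤ C₀ := (matSpecNorm_nonneg S).trans hS
  have hBC : matMaxNorm B ^ 2 ≤ C₁ ^ 2 := pow_le_pow_left₀ (matMaxNorm_nonneg B) hB 2
  have hlam0 : 0 ≤ lam := (div_nonneg (Nat.cast_nonneg d) hC₁.le).trans hlam
  have key := abs_mul_transpose_add_mulVec_apply_le B S x a
  rw [hx, hx1, mul_one, Pi.smul_apply, smul_eq_mul, abs_mul, abs_of_nonneg hlam0] at key
  simp only [Fintype.card_fin] at key
  have hdx : d / C₁ * |x a| ≤ √d * (r * C₁ ^ 2 + C₀) := by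
    calc d / C₁ * |x a| ≤ lam * |x a| := mul_le_mul_of_nonneg_right hlam (abs_nonneg _)
      _ ≤ r * √d * matMaxNorm B ^ 2 + matSpecNorm S := key
      _ ≤ √d * (r * C₁ ^ 2 + C₀) := by
          nlinarith [mul_le_mul_of_nonneg_left hBC (by positivity : (0 : ℝ) ≤ r * √d),
            mul_le_mul_of_nonneg_left hsd hC₀]
  rw [div_mul_eq_mul_div, div_le_iff₀ hC₁] at hdx
  have hsd0 : 0 < √(d : ℝ) := one_pos.trans_le hsd
  rw [le_div_iff₀ hsd0]
  refine le_of_mul_le_mul_left ?_ hsd0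
  calc √d * (|x a| * √d) = d * |x a| := by rw [mul_comm (|x a|), ← mul_assoc, hdd]
    _ ≤ √d * (r * C₁ ^ 2 + C₀) * C₁ := hdx
    _ = √d * (r * C₁ ^ 3 + C₀ * C₁) := by ring

theorem incoherent_of_pervasive {d r : ℕ} (hrd : r ≤ d) (hr : 0 < r) {C₀ C₁ : ℝ} (hC₁ : 0 < C₁)
    {B : Matrix (Fin d) (Fin r) ℝ} {S : Matrix (Fin d) (Fin d) ℝ} (hS : S.PosSemidef)
    (hSn : matSpecNorm S ≤ C₀) {lam : Fin d → ℝ} {V : Matrix (Fin d) (Fin d) ℝ}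
    (heig : ∀ i, (B * Bᵀ + S) *ᵥ V i = lam i • V i) (hV : V * Vᵀ = 1) (hlam : Antitone lam)
    {lamb : Fin r → ℝ} {W : Matrix (Fin r) (Fin d) ℝ} (hW : W * Wᵀ = 1) (hlamb : Antitone lamb)
    (hBB : B * Bᵀ = Wᵀ * diagonal lamb * W) (hB : matMaxNorm B ≤ C₁)
    (hlambr : d / C₁ ≤ lamb ⟨r - 1, Nat.sub_lt hr one_pos⟩) :
    (∀ i : Fin r, vecSupNorm (V (Fin.castLE hrd i)) ≤ (r * C₁ ^ 3 + C₀ * C₁) / √d) ∧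
      matCoherence (Vᵀ.submatrix id (Fin.castLE hrd)) ≤ r * (r * C₁ ^ 3 + C₀ * C₁) ^ 2 ∧
      ∀ i : Fin r, |lam (Fin.castLE hrd i) - lamb i| ≤ C₀ := by
  have hC₀ : 0 ≤ C₀ := (matSpecNorm_nonneg S).trans hSn
  have hN : Wᵀ * diagonal lamb * W + S = Vᵀ * diagonal lam * V :=
    hBB ▸ eq_spectral_of_mulVec_eq_smul hV heig
  have hlamb_ge : ∀ i, d / C₁ ≤ lamb i := fun i =>
    hlambr.trans (hlamb (Fin.le_def.mpr (Nat.le_sub_one_of_lt i.2)))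
  have hlow : ∀ i, lamb i ≤ lam (Fin.castLE hrd i) :=
    le_eigenvalue_add_posSemidef hW hlamb hV hlam hS hN hrd
  have hup : ∀ i, lam (Fin.castLE hrd i) ≤ lamb i + C₀ := fun i =>
    (eigenvalue_le_add_matSpecNorm hW hlamb hV hlam hN hrd
      ((div_nonneg (Nat.cast_nonneg d) hC₁.le).trans (hlamb_ge i))).trans (by linarith)
  have hent : ∀ i a, |V (Fin.castLE hrd i) a| ≤ (r * C₁ ^ 3 + C₀ * C₁) / √d := fun i =>
    abs_apply_le_of_spiked_eigenvector (hr.trans_le hrd) hC₁ hB hSn (heig _)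
      (vec2Norm_row_eq_one hV _) ((hlamb_ge i).trans (hlow i))
  refine ⟨fun i => Real.iSup_le (hent i) ?_, ?_,
    fun i => abs_le.mpr ⟨by linarith [hlow i], by linarith [hup i]⟩⟩
  · exact (abs_nonneg _).trans (hent i ⟨0, hr.trans_le hrd⟩)
  · calc matCoherence _ ≤ (r * C₁ ^ 3 + C₀ * C₁) ^ 2 :=
          matCoherence_le_of_abs_le fun a j => hent j a
      _ ≤ r * (r * C₁ ^ 3 + C₀ * C₁) ^ 2 :=
        le_mul_of_one_le_left (sq_nonneg _) (by exact_mod_cast hr)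

theorem matMaxNorm_le_of_incoherent {d r : ℕ} (hrd : r ≤ d) (hr : 0 < r) {C₀ C₁ : ℝ}
    {B : Matrix (Fin d) (Fin r) ℝ} {S : Matrix (Fin d) (Fin d) ℝ} (hS : S.PosSemidef)
    (hSn : matSpecNorm S ≤ C₀) {lam : Fin d → ℝ} {V : Matrix (Fin d) (Fin d) ℝ}
    (heig : ∀ i, (B * Bᵀ + S) *ᵥ V i = lam i • V i) (hV : V * Vᵀ = 1) (hlam : Antitone lam)
    (hcoh : matCoherence (Vᵀ.submatrix id (Fin.castLE hrd)) ≤ C₁)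
    (hlam0 : lam ⟨0, hr.trans_le hrd⟩ ≤ C₁ * d) :
    matMaxNorm B ≤ √(C₁ ^ 2 * r + C₀) := by
  have hN := eq_spectral_of_mulVec_eq_smul hV heig
  have hC₀ : 0 ≤ C₀ := (matSpecNorm_nonneg S).trans hSn
  have hC₁ : 0 ≤ C₁ := (matCoherence_nonneg _).trans hcoh
  set s := Finset.univ.map (Fin.castLEEmb hrd)
  have htop : ∀ i ∈ s, lam i ≤ C₁ * d := fun i _ =>
    (hlam (Fin.le_def.mpr (Nat.zero_le i))).trans hlam0
  have htail : ∀ i ∉ s, lam i ≤ C₀ := fun i hi => by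
    have hri : r ≤ i := not_lt.mp fun h => hi (Finset.mem_map.mpr ⟨⟨i, h⟩, Finset.mem_univ _, rfl⟩)
    exact (hlam (Fin.le_def.mpr hri)).trans
      ((eigenvalue_le_matSpecNorm_of_lowRank B hV hlam hN (hri.trans_lt i.2)).trans hSn)
  refine matMaxNorm_le (fun a k => Real.abs_le_sqrt ?_) (by positivity)
  have hrow : ∑ i ∈ s, V i a ^ 2 ≤ C₁ * r / d := by
    simpa [s] using sum_sq_le_of_matCoherence_le hcoh a
  have hBa : B a k ^ 2 ≤ (B * Bᵀ + S) a a := by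
    calc B a k ^ 2 ≤ ∑ j, B a j ^ 2 :=
          Finset.single_le_sum (f := fun j => B a j ^ 2) (fun j _ => sq_nonneg _)
            (Finset.mem_univ k)
      _ ≤ (B * Bᵀ + S) a a := by
          simpa [mul_apply, sq] using hS.diag_nonneg (i := a)
  have hd : (0 : ℝ) < d := by exact_mod_cast a.pos
  calc B a k ^ 2 ≤ C₁ * d * (C₁ * r / d) + C₀ := by
        have := diag_spectral_le hV s htop htail hC₀ a
        rw [← hN] at this
        nlinarith [mul_le_mul_of_nonneg_left hrow (by positivity : 0 ≤ C₁ * d)]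
    _ = C₁ ^ 2 * r + C₀ := by field_simp

/-- Pervasiveness of factors is equivalent to incoherence of leading eigenvectors together
with spiked eigenvalues (Proposition 3.2 of Fan–Wang–Zhong). -/
theorem pervasiveness_iff_incoherence
    (C₀ : ℝ) (hC₀ : 0 < C₀) (r : ℕ) (hr : 0 < r) (C₁ : ℝ) (hC₁ : 0 < C₁) :
    -- part (i): pervasiveness implies incoherence
    (∃ C₂ : ℝ, 0 < C₂ ∧
      ∀ (d : ℕ) (hrd : r ≤ d) (B : Matrix (Fin d) (Fin r) ℝ)
        (Su : Matrix (Fin d) (Fin d) ℝ), Su.PosSemidef → matSpecNorm Su ≤ C₀ →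
      ∀ (lam : Fin d → ℝ) (v : Fin d → Fin d → ℝ),
        (∀ i, (B * Bᵀ + Su).mulVec (v i) = lam i • v i) →
        (∀ i j, ∑ k, v i k * v j k = if i = j then (1 : ℝ) else 0) →
        (∀ i j : Fin d, i ≤ j → lam j ≤ lam i) →
      ∀ (lamb : Fin r → ℝ) (w : Fin r → Fin d → ℝ),
        (∀ i j, ∑ k, w i k * w j k = if i = j then (1 : ℝ) else 0) →
        (∀ i j : Fin r, i ≤ j → lamb j ≤ lamb i) →
        (∀ a b, (B * Bᵀ) a b = ∑ i, lamb i * w i a * w i b) →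
        matMaxNorm B ≤ C₁ →
        (d : ℝ) / C₁ ≤ lamb ⟨r - 1, by omega⟩ →
        (∀ i : Fin r, (d : ℝ) / C₁ ≤
          lamb i - (if h : (i : ℕ) + 1 < r then lamb ⟨(i : ℕ) + 1, h⟩ else 0)) →
        C₂ ≤ (d : ℝ) →
        (∀ i : Fin r, vecSupNorm (v (Fin.castLE hrd i)) ≤ C₂ / Real.sqrt d) ∧
        matCoherence (Matrix.of fun a (k : Fin r) => v (Fin.castLE hrd k) a) ≤
          (r : ℝ) * C₂ ^ 2 ∧
        (∀ i : Fin r, |lam (Fin.castLE hrd i) - lamb i| ≤ C₀))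
    ∧
    -- part (ii): incoherence (with spiked eigenvalues) implies pervasiveness
    (∃ C₂ : ℝ, 0 < C₂ ∧
      ∀ (d : ℕ) (hrd : r ≤ d) (B : Matrix (Fin d) (Fin r) ℝ)
        (Su : Matrix (Fin d) (Fin d) ℝ), Su.PosSemidef → matSpecNorm Su ≤ C₀ →
      ∀ (lam : Fin d → ℝ) (v : Fin d → Fin d → ℝ),
        (∀ i, (B * Bᵀ + Su).mulVec (v i) = lam i • v i) →
        (∀ i j, ∑ k, v i k * v j k = if i = j then (1 : ℝ) else 0) →
        (∀ i j : Fin d, i ≤ j → lam j ≤ lam i) →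
        matCoherence (Matrix.of fun a (k : Fin r) => v (Fin.castLE hrd k) a) ≤ C₁ →
        (d : ℝ) / C₁ ≤ lam (Fin.castLE hrd ⟨r - 1, by omega⟩) →
        lam ⟨0, by omega⟩ ≤ C₁ * (d : ℝ) →
        matMaxNorm B ≤ C₂) := by
  have hr' : (0 : ℝ) < r := by exact_mod_cast hr
  refine ⟨⟨r * C₁ ^ 3 + C₀ * C₁, by positivity, fun d hrd B Su hSu hSun lam v heig hv hlam lamb w hw
    hlamb hBB hB hlambr _ _ => ?_⟩, ⟨√(C₁ ^ 2 * r + C₀), by positivity,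
    fun d hrd B Su hSu hSun lam v heig hv hlam hcoh _ hlam0 => ?_⟩⟩
  · exact incoherent_of_pervasive hrd hr hC₁ hSu hSun (V := of v) heig (of_mul_transpose_eq_one hv)
      hlam (of_mul_transpose_eq_one hw) hlamb (mul_transpose_eq_spectral hBB) hB hlambr
  · exact matMaxNorm_le_of_incoherent hrd hr hSu hSun (V := of v) heig (of_mul_transpose_eq_one hv)
      hlam hcoh hlam0
end

section
/- Let T be a bounded linear operator on a Banach space 𝓑 with norm ‖·‖, assume T has a bounded inverse, and set β = ‖T^{−1}‖^{−1}. Let φ : 𝓑 → 𝓑 satisfy ‖φ(x)‖ ≤ η‖x‖² and ‖φ(x) − φ(y)‖ ≤ 2η·max{‖x‖, ‖y‖}·‖x − y‖ for some η ≥ 0 and all x, y ∈ 𝓑. Suppose 𝓑₀ is a closed subspace of 𝓑 with T^{−1}(𝓑₀) ⊆ 𝓑₀ and φ(𝓑₀) ⊆ 𝓑₀, and let y ∈ 𝓑₀ satisfy 4η‖y‖ < β². Then the sequence defined by x₀ = 0 and x_{k+1} = T^{−1}(y + φ(x_k)) converges to a solution x* of Tx = y + φ(x); moreover x* ∈ 𝓑₀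 and ‖x*‖ ≤ 2‖y‖/β. -/
open Matrix BigOperators

/-!
With `F x = T⁻¹ (y + φ x)` and `r = 2‖y‖/β`, the bound `η r² = (4η‖y‖/β²)‖y‖ ≤ ‖y‖` shows
that `F` maps the closed ball of radius `r` into itself, and on that ball the Lipschitz estimate
for `φ` makes `F` a contraction with constant `2ηr/β = 4η‖y‖/β² < 1`. The ball intersected with
the closed, `F`-invariant subspace `𝓑₀` is complete and contains `0`, so the Banach fixed-point
theorem gives the limit of the iteration together with its properties.
-/
section

open Set Metric Filter Topology Function

variable {E : Type*} [NormedAddCommGroup E] [NormedSpace ℝ E]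

def picardMap (L : E →L[ℝ] E) (y : E) (φ : E → E) (x : E) : E := L (y + φ x)

variable {L : E →L[ℝ] E} {y : E} {φ : E → E} {η : ℝ}

theorem mapsTo_picardMap_closedBall (hη : 0 ≤ η) (hφ : ∀ x, ‖φ x‖ ≤ η * ‖x‖ ^ 2)
    (hsmall : 4 * η * ‖L‖ ^ 2 * ‖y‖ ≤ 1) :
    MapsTo (picardMap L y φ) (closedBall 0 (2 * ‖L‖ * ‖y‖))
      (closedBall 0 (2 * ‖L‖ * ‖y‖)) := by
  intro x hx
  rw [mem_closedBall_zero_iff] at hx ⊢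
  have hquad : η * ‖x‖ ^ 2 ≤ ‖y‖ :=
    calc η * ‖x‖ ^ 2 ≤ η * (2 * ‖L‖ * ‖y‖) ^ 2 := by gcongr
      _ = (4 * η * ‖L‖ ^ 2 * ‖y‖) * ‖y‖ := by ring
      _ ≤ ‖y‖ := mul_le_of_le_one_left (norm_nonneg _) hsmall
  calc ‖L (y + φ x)‖ ≤ ‖L‖ * ‖y + φ x‖ := L.le_opNorm _
    _ ≤ ‖L‖ * (‖y‖ + η * ‖x‖ ^ 2) := by
        gcongr
        exact (norm_add_le _ _).trans (add_le_add_right (hφ x) _)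
    _ ≤ ‖L‖ * (‖y‖ + ‖y‖) := by gcongr
    _ = 2 * ‖L‖ * ‖y‖ := by ring

theorem lipschitzOnWith_picardMap_closedBall (hη : 0 ≤ η)
    (hφ : ∀ x x', ‖φ x - φ x'‖ ≤ 2 * η * max ‖x‖ ‖x'‖ * ‖x - x'‖) (r : ℝ) :
    LipschitzOnWith (2 * η * r * ‖L‖).toNNReal (picardMap L y φ) (closedBall 0 r) := by
  refine LipschitzOnWith.of_dist_le' fun x hx x' hx' => ?_
  rw [mem_closedBall_zero_iff] at hx hx'
  simp only [dist_eq_norm, picardMap]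
  calc ‖L (y + φ x) - L (y + φ x')‖ = ‖L (φ x - φ x')‖ := by
        rw [← map_sub, add_sub_add_left_eq_sub]
    _ ≤ ‖L‖ * ‖φ x - φ x'‖ := L.le_opNorm _
    _ ≤ ‖L‖ * (2 * η * r * ‖x - x'‖) := by
        gcongr
        exact (hφ x x').trans (by gcongr; exact max_le hx hx')
    _ = 2 * η * r * ‖L‖ * ‖x - x'‖ := by ring

theorem exists_isFixedPt_picardMap_tendsto [CompleteSpace E] (hη : 0 ≤ η)
    (hφ₁ : ∀ x, ‖φ x‖ ≤ η * ‖x‖ ^ 2)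
    (hφ₂ : ∀ x x', ‖φ x - φ x'‖ ≤ 2 * η * max ‖x‖ ‖x'‖ * ‖x - x'‖)
    {s : Set E} (hs : IsClosed s) (hs₀ : 0 ∈ s) (hsF : MapsTo (picardMap L y φ) s s)
    (hsmall : 4 * η * ‖L‖ ^ 2 * ‖y‖ < 1) :
    ∃ x ∈ s ∩ closedBall 0 (2 * ‖L‖ * ‖y‖), IsFixedPt (picardMap L y φ) x ∧
      Tendsto (fun n ↦ (picardMap L y φ)^[n] 0) atTop (𝓝 x) := by
  set r := 2 * ‖L‖ * ‖y‖
  have hmaps : MapsTo (picardMap L y φ) (s ∩ closedBall 0 r) (s ∩ closedBall 0 r) :=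
    hsF.inter_inter (mapsTo_picardMap_closedBall hη hφ₁ hsmall.le)
  have hcontr : ContractingWith (2 * η * r * ‖L‖).toNNReal (hmaps.restrict _ _ _) := by
    refine ⟨?_, ((lipschitzOnWith_picardMap_closedBall hη hφ₂ r).mono
      inter_subset_right).mapsToRestrict hmaps⟩
    rw [Real.toNNReal_lt_one, show 2 * η * r * ‖L‖ = 4 * η * ‖L‖ ^ 2 * ‖y‖ by ring]
    exact hsmall
  obtain ⟨x, hx, hfix, hlim, -⟩ :=
    hcontr.exists_fixedPoint' (hs.inter isClosed_closedBall).isComplete hmaps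
      ⟨hs₀, mem_closedBall_self (by positivity)⟩ (edist_ne_top _ _)
  exact ⟨x, hx, hfix, hlim⟩

end

/-- Convergence of the quadratic fixed-point iteration in a Banach space
(Lemma 5.2 of Fan–Wang–Zhong, after Stewart). -/
theorem banach_quadratic_fixed_point
    {B : Type*} [NormedAddCommGroup B] [NormedSpace ℝ B] [CompleteSpace B]
    (T : B ≃L[ℝ] B) (β : ℝ) (hβ : β = ‖(T.symm : B →L[ℝ] B)‖⁻¹)
    (φ : B → B) (η : ℝ) (hη : 0 ≤ η)
    (hφ1 : ∀ x : B, ‖φ x‖ ≤ η * ‖x‖ ^ 2)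
    (hφ2 : ∀ x y : B, ‖φ x - φ y‖ ≤ 2 * η * max ‖x‖ ‖y‖ * ‖x - y‖)
    (B₀ : Submodule ℝ B) (hB₀closed : IsClosed (B₀ : Set B))
    (hTinv : ∀ x ∈ B₀, T.symm x ∈ B₀)
    (hφB₀ : ∀ x ∈ B₀, φ x ∈ B₀)
    (y : B) (hy : y ∈ B₀) (hsmall : 4 * η * ‖y‖ < β ^ 2)
    (x : ℕ → B) (hx0 : x 0 = 0)
    (hxrec : ∀ k : ℕ, x (k + 1) = T.symm (y + φ (x k))) :
    ∃ xs : B, Filter.Tendsto x Filter.atTop (nhds xs) ∧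
      T xs = y + φ xs ∧ xs ∈ B₀ ∧ ‖xs‖ ≤ 2 * ‖y‖ / β := by
  set L : B →L[ℝ] B := (T.symm : B →L[ℝ] B)
  have hL : ‖L‖ = β⁻¹ := by rw [hβ, inv_inv]
  have hβsq : 0 < β ^ 2 := (by positivity : 0 ≤ 4 * η * ‖y‖).trans_lt hsmall
  have hiter : x = fun k ↦ (picardMap L y φ)^[k] 0 := by
    funext k
    induction k with
    | zero => exact hx0
    | succ k ih => rw [hxrec, Function.iterate_succ_apply', ← ih]; rfl
  obtain ⟨xs, ⟨hxsB₀, hxs_norm⟩, hfix, hlim⟩ :=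
    exists_isFixedPt_picardMap_tendsto (L := L) (y := y) hη hφ1 hφ2 hB₀closed B₀.zero_mem
      (fun z hz ↦ hTinv _ (B₀.add_mem hy (hφB₀ z hz)))
      (calc 4 * η * ‖L‖ ^ 2 * ‖y‖ = 4 * η * ‖y‖ / β ^ 2 := by rw [hL]; ring
        _ < 1 := (div_lt_one hβsq).2 hsmall)
  refine ⟨xs, hiter ▸ hlim, (T.symm_apply_eq.1 hfix).symm, hxsB₀, ?_⟩
  calc ‖xs‖ ≤ 2 * ‖L‖ * ‖y‖ := mem_closedBall_zero_iff.1 hxs_norm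
    _ = 2 * ‖y‖ / β := by rw [hL]; ring
end
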